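/- Let ε > 0 and M ≥ 1. For every joint sub-distribution P_{A,E} on 𝒜 × ℰ, Δ_{d,min}(M,ε|P_{A,E}) ≤ (2 + √ε)·inf_{s ≥ 0} exp((−s·H^↑_{1+s}(A|E|P_{A,E}) + s·log M)/(1 + 2s)). Moreover, if P_{A,E} is a normalized joint distribution and M ≥ 3, then Δ_{I,min}(M,ε|P_{A,E}) ≤ η(inf_{s ≥ 0} exp((−s·H^↓_{1+s}(A|E|P_{A,E}) + s·log M)/(1 + s)), ε + log M). (In both infima the s = 0 term is read as 1.) -/

import Mathlib

open Real Finset Filter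

attribute [local instance] Classical.propDecidable

namespace Hayashi

def IsSubDist {S : Type*} [Fintype S] (P : S → ℝ) : Prop :=
  (∀ x, 0 ≤ P x) ∧ ∑ x, P x ≤ 1

def IsDist {S : Type*} [Fintype S] (P : S → ℝ) : Prop :=
  (∀ x, 0 ≤ P x) ∧ ∑ x, P x = 1

variable {A E : Type*} [Fintype A] [Fintype E]

noncomputable def margE (P : A × E → ℝ) (e : E) : ℝ := ∑ a, P (a, e)

noncomputable def margNorm (P : A × E → ℝ) (e : E) : ℝ := margE P e / ∑ e', margE P e'

noncomputable def l1 (P P' : A × E → ℝ) : ℝ := ∑ a, ∑ e, |P (a, e) - P' (a, e)|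

noncomputable def eta (x y : ℝ) : ℝ := -x * Real.log x + x * y

noncomputable def condRenyi (P : A × E → ℝ) (Q : E → ℝ) (s : ℝ) : ℝ :=
  (-1 / s) * Real.log (∑ a, ∑ e, P (a, e) ^ (1 + s) * Q e ^ (-s))

noncomputable def condRenyiUp (P : A × E → ℝ) (s : ℝ) : ℝ :=
  sSup {x | ∃ Q : E → ℝ, IsDist Q ∧ (∀ e, 0 < Q e) ∧ x = condRenyi P Q s}

noncomputable def condRenyiDown (P : A × E → ℝ) (s : ℝ) : ℝ :=
  condRenyi P (margNorm P) s

noncomputable def condEnt (P : A × E → ℝ) : ℝ :=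
  -∑ a, ∑ e, P (a, e) * Real.log (P (a, e) / margE P e)

noncomputable def H2cond (P : A × E → ℝ) (Q : E → ℝ) : ℝ :=
  -Real.log (∑ a, ∑ e, P (a, e) ^ 2 / Q e)

noncomputable def d2cond (P : A × E → ℝ) (Q : E → ℝ) : ℝ :=
  ∑ a, ∑ e, (P (a, e) - margE P e / (Fintype.card A : ℝ)) ^ 2 / Q e

noncomputable def d1' (P : A × E → ℝ) : ℝ :=
  ∑ a, ∑ e, |P (a, e) - margE P e / (Fintype.card A : ℝ)|

noncomputable def Iprime (P : A × E → ℝ) : ℝ :=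
  ∑ a, ∑ e, P (a, e) * Real.log (P (a, e) * (Fintype.card A : ℝ) / margE P e)

noncomputable def Hmin (P : A × E → ℝ) (Q : E → ℝ) : ℝ :=
  -Real.log (sSup {r | ∃ a e, 0 < Q e ∧ r = P (a, e) / Q e})

noncomputable def D2div {E : Type*} [Fintype E] (P Q : E → ℝ) : ℝ :=
  Real.log (∑ e, P e ^ 2 / Q e)

noncomputable def pushHash {B : Type*} (f : A → B) (P : A × E → ℝ) : B × E → ℝ :=
  fun be => ∑ a, (if f a = be.1 then P (a, be.2) else 0)

noncomputable def Delta_d2 (M ε : ℝ) (P : A × E → ℝ) : ℝ :=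
  sInf {x | ∃ (Q : E → ℝ) (P' : A × E → ℝ), IsDist Q ∧ (∀ e, 0 < Q e) ∧ IsSubDist P' ∧
    x = 2 * l1 P P' + Real.sqrt ε * Real.sqrt M * Real.exp (-H2cond P' Q / 2)}

noncomputable def Delta_I2 (M ε : ℝ) (P : A × E → ℝ) : ℝ :=
  sInf {x | ∃ P' : A × E → ℝ, IsSubDist P' ∧ (∀ e, margE P' e ≤ margE P e) ∧
    x = eta (l1 P P') (Real.log M) + ε * M * Real.exp (-H2cond P' (margE P))}

noncomputable def Delta_dmin (M ε : ℝ) (P : A × E → ℝ) : ℝ :=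
  sInf {x | ∃ (Q : E → ℝ) (P' : A × E → ℝ), IsDist Q ∧ (∀ e, 0 < Q e) ∧ IsSubDist P' ∧
    x = 2 * l1 P P' + Real.sqrt ε * Real.sqrt M * Real.exp (-Hmin P' Q / 2)}

noncomputable def Delta_Imin (M ε : ℝ) (P : A × E → ℝ) : ℝ :=
  sInf {x | ∃ P' : A × E → ℝ, IsSubDist P' ∧ (∀ e, margE P' e ≤ margE P e) ∧
    x = eta (l1 P P') (Real.log M) + ε * M * Real.exp (-Hmin P' (margE P))}

noncomputable def DeltaBar_Imin (M ε : ℝ) (P : A × E → ℝ) : ℝ :=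
  sInf {x | ∃ P' : A × E → ℝ, IsSubDist P' ∧ (∀ e, margE P' e ≤ margE P e) ∧
    x = eta (l1 P P') (Real.log M) + Real.log (1 + ε * M * Real.exp (-Hmin P' (margE P)))}

noncomputable def Pn (P : A × E → ℝ) (n : ℕ) : (Fin n → A) × (Fin n → E) → ℝ :=
  fun ae => ∏ i, P (ae.1 i, ae.2 i)

/-!
Both bounds come from smoothing `P` by clipping it at a multiple of a reference distribution,
`P' = min (P, c • Q)`. Then `exp (-Hmin P' Q) ≤ c`, while pointwise
`P - P' ≤ c ^ (-s) P ^ (1 + s) Q ^ (-s)` for every `s ≥ 0`, so that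
`‖P - P'‖₁ ≤ c ^ (-s) exp (-s H_{1+s}(A|E|P‖Q))`. Balancing the two error terms by the choice of `c`
bounds `Δ_{d,min}` by `(2 + √ε) exp ((-s H_{1+s}(A|E|P‖Q) + s log M) / (1 + 2s))` for every `Q`,
and taking `Q = P_E` bounds both error terms of `Δ_{I,min}` by
`exp ((-s H↓_{1+s} + s log M) / (1 + s))`. The infimum over `s` passes through `η`, since
`η (·, log M)` is increasing and continuous on `[0, M / e]` and the infimum is at most `1`.
-/

lemma eta_eq_exp_mul_negMulLog (x y : ℝ) : eta x y = exp y * negMulLog (x * exp (-y)) := by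
  rcases eq_or_ne x 0 with rfl | hx
  · simp [eta]
  · rw [negMulLog, log_mul hx (exp_ne_zero _), log_exp, eta, exp_neg]
    field_simp
    ring

lemma eta_le_eta {a b y : ℝ} (ha : 0 ≤ a) (hab : a ≤ b) (hb : b ≤ exp (y - 1)) :
    eta a y ≤ eta b y := by
  have hb' : b * exp (-y) ≤ exp (-1) := by
    rwa [← le_div_iff₀ (exp_pos _), ← exp_sub, sub_neg_eq_add, neg_add_eq_sub]
  have key := mul_log_strictAntiOn.antitoneOn
    ⟨mul_nonneg ha (exp_pos _).le, (mul_le_mul_of_nonneg_right hab (exp_pos _).le).trans hb'⟩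
    ⟨mul_nonneg (ha.trans hab) (exp_pos _).le, hb'⟩
    (mul_le_mul_of_nonneg_right hab (exp_pos (-y)).le)
  rw [eta_eq_exp_mul_negMulLog, eta_eq_exp_mul_negMulLog, negMulLog_eq_neg]
  exact mul_le_mul_of_nonneg_left (neg_le_neg key) (exp_pos _).le

lemma eta_nonneg {x M : ℝ} (hM : 0 < M) (hx : 0 ≤ x) (hxM : x ≤ M) : 0 ≤ eta x (log M) := by
  rw [eta_eq_exp_mul_negMulLog, exp_log hM, exp_neg, exp_log hM]
  exact mul_nonneg hM.le
    (negMulLog_nonneg (by positivity) (by rwa [← div_eq_mul_inv, div_le_one hM]))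

lemma continuous_eta (y : ℝ) : Continuous fun x => eta x y := by
  simp_rw [eta_eq_exp_mul_negMulLog]
  fun_prop

lemma le_apply_csInf_of_continuousAt {S : Set ℝ} {G : ℝ → ℝ} {x b : ℝ} (hne : S.Nonempty)
    (hbdd : BddBelow S) (hb : sInf S < b) (hG : ContinuousAt G (sInf S))
    (h : ∀ y ∈ S, y < b → x ≤ G y) :
    x ≤ G (sInf S) := by
  obtain ⟨u, -, hu, huS⟩ := exists_seq_tendsto_sInf hne hbdd
  refine ge_of_tendsto (hG.tendsto.comp hu) ?_
  filter_upwards [hu.eventually (gt_mem_nhds hb)] with n hn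
  exact h _ (huS n) hn

lemma le_mul_exp_sSup {S : Set ℝ} (hne : S.Nonempty) {x k a b c : ℝ} (hk : 0 < k) (ha : 0 < a)
    (hb : 0 < b) (h : ∀ y ∈ S, x ≤ k * exp ((-(a * y) + c) / b)) :
    x ≤ k * exp ((-(a * sSup S) + c) / b) := by
  rcases le_or_gt x 0 with hx | hx
  · exact hx.trans (by positivity)
  -- the bound is an antitone bijection of `y`, so it is equivalent to an upper bound on `y`
  have key : ∀ y, x ≤ k * exp ((-(a * y) + c) / b) ↔ y ≤ (c - b * log (x / k)) / a := by
    intro y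
    rw [← div_le_iff₀' hk, ← log_le_iff_le_exp (div_pos hx hk), le_div_iff₀ hb,
      le_div_iff₀ ha]
    constructor <;> intro <;> linarith
  exact (key _).2 (csSup_le hne fun y hy => (key y).1 (h y hy))

lemma rpow_neg_mul_eq_exp {T M s γ κ : ℝ} (hT : 0 < T)
    (hκ : κ + s * γ = log T + s * log M) : exp (γ - log M) ^ (-s) * T = exp κ := by
  rw [← exp_mul, ← exp_log hT, ← exp_add]
  congr 1
  linarith

lemma sub_min_mul_le_rpow {s c q p : ℝ} (hs : 0 ≤ s) (hc : 0 < c) (hq : 0 ≤ q) (hp : 0 ≤ p)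
    (hqp : 0 < p → 0 < q) : p - min p (c * q) ≤ c ^ (-s) * (p ^ (1 + s) * q ^ (-s)) := by
  rcases le_or_gt p (c * q) with h | h
  · rw [min_eq_left h, sub_self]
    positivity
  have hp' : 0 < p := (mul_nonneg hc.le hq).trans_lt h
  have hq' := hqp hp'
  have hratio : 1 ≤ (p / (c * q)) ^ s := one_le_rpow ((one_le_div (by positivity)).2 h.le) hs
  have key : c ^ (-s) * (p ^ (1 + s) * q ^ (-s)) = p * (p / (c * q)) ^ s := by
    rw [rpow_add hp', rpow_one, div_rpow hp (by positivity), mul_rpow hc.le hq, rpow_neg hc.le,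
      rpow_neg hq]
    field_simp
  rw [min_eq_right h.le, key]
  nlinarith [mul_nonneg hc.le hq]

lemma exp_neg_Hmin_le {A E : Type*} {P' : A × E → ℝ} {Q : E → ℝ} {c : ℝ}
    (hpos : ∃ a e, 0 < Q e ∧ 0 < P' (a, e))
    (hle : ∀ a e, 0 < Q e → P' (a, e) ≤ c * Q e) : exp (-Hmin P' Q) ≤ c := by
  obtain ⟨a, e, hQe, hP'e⟩ := hpos
  set S := {r | ∃ a e, 0 < Q e ∧ r = P' (a, e) / Q e}
  have hS : ∀ r ∈ S, r ≤ c := by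
    rintro r ⟨a, e, hQe, rfl⟩
    exact (div_le_iff₀ hQe).2 (hle a e hQe)
  have hmem : P' (a, e) / Q e ∈ S := ⟨a, e, hQe, rfl⟩
  have hsup : 0 < sSup S := (div_pos hP'e hQe).trans_le (le_csSup ⟨c, hS⟩ hmem)
  rw [Hmin, neg_neg, exp_log hsup]
  exact csSup_le ⟨_, hmem⟩ hS

noncomputable def clip {A E : Type*} (P : A × E → ℝ) (Q : E → ℝ) (c : ℝ) : A × E → ℝ :=
  fun p => min (P p) (c * Q p.2)

lemma clip_le {A E : Type*} {P : A × E → ℝ} {Q : E → ℝ} {c : ℝ} (p : A × E) :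
    clip P Q c p ≤ P p :=
  min_le_left _ _

lemma exp_neg_Hmin_clip_le {A E : Type*} {P : A × E → ℝ} {Q : E → ℝ} {c : ℝ}
    (hpos : ∃ a e, 0 < Q e ∧ 0 < P (a, e)) (hc : 0 < c) :
    exp (-Hmin (clip P Q c) Q) ≤ c := by
  obtain ⟨a, e, hQe, hPe⟩ := hpos
  exact exp_neg_Hmin_le ⟨a, e, hQe, lt_min hPe (mul_pos hc hQe)⟩ fun _ _ _ => min_le_right _ _

lemma le_margE {A E : Type*} [Fintype A] {P : A × E → ℝ} (hP : ∀ p, 0 ≤ P p) (a : A) (e : E) :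
    P (a, e) ≤ margE P e :=
  Finset.single_le_sum (fun a' _ => hP (a', e)) (Finset.mem_univ a)

lemma margE_clip_le {A E : Type*} [Fintype A] {P : A × E → ℝ} {Q : E → ℝ} {c : ℝ} (e : E) :
    margE (clip P Q c) e ≤ margE P e :=
  Finset.sum_le_sum fun a _ => clip_le (a, e)

lemma isDist_uniform [Nonempty E] : IsDist fun _ : E => (Fintype.card E : ℝ)⁻¹ := by
  refine ⟨fun _ => by positivity, ?_⟩
  simp

section Distributions

variable {P P' : A × E → ℝ} {Q : E → ℝ} {c : ℝ}

lemma sum_margE (P : A × E → ℝ) : ∑ e, margE P e = ∑ p, P p := by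
  rw [Fintype.sum_prod_type, Finset.sum_comm]
  rfl

lemma margNorm_eq_margE (hP : IsDist P) : margNorm P = margE P := by
  ext e
  rw [margNorm, sum_margE, hP.2, div_one]

lemma l1_nonneg (P P' : A × E → ℝ) : 0 ≤ l1 P P' :=
  Finset.sum_nonneg fun _ _ => Finset.sum_nonneg fun _ _ => abs_nonneg _

lemma l1_le_two (hP : IsSubDist P) (hP' : IsSubDist P') : l1 P P' ≤ 2 := by
  calc l1 P P' ≤ ∑ p, (P p + P' p) := by
        rw [l1, Fintype.sum_prod_type]
        gcongr with a _ e _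
        exact (abs_sub _ _).trans_eq (by rw [abs_of_nonneg (hP.1 _), abs_of_nonneg (hP'.1 _)])
    _ ≤ 2 := by rw [Finset.sum_add_distrib]; linarith [hP.2, hP'.2]

lemma sum_rpow_pos (hP : ∀ p, 0 ≤ P p) (hQ : ∀ e, 0 ≤ Q e) {a : A} {e : E} (hPae : 0 < P (a, e))
    (hQe : 0 < Q e) (s : ℝ) : 0 < ∑ a, ∑ e, P (a, e) ^ (1 + s) * Q e ^ (-s) := by
  rw [← Fintype.sum_prod_type (f := fun p => P p ^ (1 + s) * Q p.2 ^ (-s))]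
  exact Finset.sum_pos' (fun p _ => by have := hP p; have := hQ p.2; positivity)
    ⟨(a, e), Finset.mem_univ _, by positivity⟩

lemma neg_mul_condRenyi {s : ℝ} (hs : s ≠ 0) (P : A × E → ℝ) (Q : E → ℝ) :
    -(s * condRenyi P Q s) = log (∑ a, ∑ e, P (a, e) ^ (1 + s) * Q e ^ (-s)) := by
  rw [condRenyi]
  field_simp

lemma isSubDist_clip (hP : IsSubDist P) (hQ : ∀ e, 0 ≤ Q e) (hc : 0 ≤ c) :
    IsSubDist (clip P Q c) :=
  ⟨fun p => le_min (hP.1 p) (mul_nonneg hc (hQ p.2)),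
    (Finset.sum_le_sum fun p _ => clip_le p).trans hP.2⟩

lemma l1_clip_le {s : ℝ} (hs : 0 ≤ s) (hc : 0 < c) (hP : ∀ p, 0 ≤ P p) (hQ : ∀ e, 0 ≤ Q e)
    (hPQ : ∀ a e, 0 < P (a, e) → 0 < Q e) :
    l1 P (clip P Q c) ≤ c ^ (-s) * ∑ a, ∑ e, P (a, e) ^ (1 + s) * Q e ^ (-s) := by
  simp_rw [l1, Finset.mul_sum]
  gcongr with a _ e _
  rw [abs_of_nonneg (sub_nonneg.2 (clip_le _))]
  exact sub_min_mul_le_rpow hs hc (hQ e) (hP _) (hPQ a e)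

end Distributions

section Smoothing

variable {M ε : ℝ} {P P' : A × E → ℝ} {Q : E → ℝ}

lemma Delta_dmin_le {c : ℝ} (hM : 0 ≤ M) (hQ : IsDist Q) (hQpos : ∀ e, 0 < Q e)
    (hP' : IsSubDist P') (hH : exp (-Hmin P' Q) ≤ c) :
    Delta_dmin M ε P ≤ 2 * l1 P P' + √ε * √(M * c) := by
  calc Delta_dmin M ε P ≤ 2 * l1 P P' + √ε * √M * exp (-Hmin P' Q / 2) := by
        refine csInf_le ⟨0, ?_⟩ ⟨Q, P', hQ, hQpos, hP', rfl⟩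
        rintro x ⟨Q', P'', -, -, -, rfl⟩
        have := l1_nonneg P P''
        positivity
    _ ≤ 2 * l1 P P' + √ε * √(M * c) := by
        rw [sqrt_mul hM, exp_half, mul_assoc]
        gcongr

lemma Delta_Imin_le (hM : 2 ≤ M) (hε : 0 ≤ ε) (hP : IsDist P) (hP' : IsSubDist P')
    (hmarg : ∀ e, margE P' e ≤ margE P e) :
    Delta_Imin M ε P ≤ eta (l1 P P') (log M) + ε * M * exp (-Hmin P' (margE P)) := by
  refine csInf_le ⟨0, ?_⟩ ⟨P', hP', hmarg, rfl⟩
  rintro x ⟨P'', hP'', -, rfl⟩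
  have := eta_nonneg (by linarith) (l1_nonneg P P'') ((l1_le_two ⟨hP.1, hP.2.le⟩ hP'').trans hM)
  have : 0 ≤ M := by linarith
  positivity

lemma Delta_dmin_le_exp_log_sum {s : ℝ} (hM : 0 < M) (hs : 0 ≤ s) (hP : IsSubDist P)
    (hpos : ∃ p, 0 < P p) (hQ : IsDist Q) (hQpos : ∀ e, 0 < Q e) :
    Delta_dmin M ε P ≤ (2 + √ε) *
      exp ((log (∑ a, ∑ e, P (a, e) ^ (1 + s) * Q e ^ (-s)) + s * log M) / (1 + 2 * s)) := by
  obtain ⟨⟨a, e⟩, hPae⟩ := hpos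
  set T := ∑ a, ∑ e, P (a, e) ^ (1 + s) * Q e ^ (-s)
  have hT : 0 < T := sum_rpow_pos hP.1 (fun e => (hQpos e).le) hPae (hQpos e) s
  set κ := (log T + s * log M) / (1 + 2 * s)
  have hκ : κ + s * (2 * κ) = log T + s * log M := by
    linarith [div_mul_cancel₀ (log T + s * log M) (by positivity : 1 + 2 * s ≠ 0)]
  -- chosen so that `√(M * c) = c ^ (-s) * T`
  set c := exp (2 * κ - log M) with hc
  have hMc : M * c = exp κ ^ 2 := by
    rw [hc, exp_sub, exp_log hM, ← exp_nat_mul]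
    field_simp
    ring_nf
  calc Delta_dmin M ε P
      ≤ 2 * l1 P (clip P Q c) + √ε * √(M * c) :=
        Delta_dmin_le hM.le hQ hQpos (isSubDist_clip hP (fun e => (hQpos e).le) (exp_pos _).le)
          (exp_neg_Hmin_clip_le ⟨a, e, hQpos e, hPae⟩ (exp_pos _))
    _ ≤ 2 * (c ^ (-s) * T) + √ε * exp κ := by
        rw [hMc, sqrt_sq (exp_pos _).le]
        gcongr
        exact l1_clip_le hs (exp_pos _) hP.1 (fun e => (hQpos e).le) fun _ e _ => hQpos e
    _ = (2 + √ε) * exp κ := by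
        rw [rpow_neg_mul_eq_exp hT hκ]
        ring

lemma Delta_dmin_le_two_add_sqrt [Nonempty A] [Nonempty E] (hM : 1 ≤ M) (hP : IsSubDist P) :
    Delta_dmin M ε P ≤ 2 + √ε := by
  have hM0 : 0 < M := by linarith
  by_cases hpos : ∃ p, 0 < P p
  · have h := Delta_dmin_le_exp_log_sum (ε := ε) (s := 0) hM0 le_rfl hP hpos isDist_uniform
      (fun _ => by positivity)
    obtain ⟨p, hp⟩ := hpos
    have hsum : 0 < ∑ a, ∑ e, P (a, e) := by
      rw [← Fintype.sum_prod_type]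
      exact Finset.sum_pos' (fun p _ => hP.1 p) ⟨p, Finset.mem_univ _, hp⟩
    simp only [add_zero, rpow_one, neg_zero, rpow_zero, mul_one, zero_mul, mul_zero,
      div_one, exp_log hsum] at h
    refine h.trans (mul_le_of_le_one_right (by positivity) ?_)
    rw [← Fintype.sum_prod_type]
    exact hP.2
  -- clipping `P = 0` gives `0`, whose `Hmin` is the junk value `-log 0 = 0`: use a small
  -- uniform sub-distribution instead
  simp only [not_exists, not_lt] at hpos
  have hP0 : ∀ p, P p = 0 := fun p => le_antisymm (hpos p) (hP.1 p)
  have hA : (0 : ℝ) < Fintype.card A := by exact_mod_cast Fintype.card_pos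
  have hE : (0 : ℝ) < Fintype.card E := by exact_mod_cast Fintype.card_pos
  set m : ℝ := (M * Fintype.card A * Fintype.card E)⁻¹
  have hsum : ∑ _p : A × E, m = M⁻¹ := by
    simp only [Finset.sum_const, Finset.card_univ, Fintype.card_prod, nsmul_eq_mul, m]
    push_cast
    field_simp
  have hl1 : l1 P (fun _ : A × E => m) = M⁻¹ := by
    simp only [l1, hP0, zero_sub, abs_neg, abs_of_pos (show 0 < m by positivity)]
    rw [← hsum, Fintype.sum_prod_type]
  have hH : exp (-Hmin (fun _ : A × E => m) fun _ : E => (Fintype.card E : ℝ)⁻¹) ≤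
      (M * Fintype.card A)⁻¹ := by
    refine exp_neg_Hmin_le ⟨Classical.arbitrary A, Classical.arbitrary E, by positivity,
      by positivity⟩ fun _ _ _ => le_of_eq ?_
    simp only [m]
    field_simp
  calc Delta_dmin M ε P
      ≤ 2 * l1 P (fun _ : A × E => m) + √ε * √(M * (M * Fintype.card A)⁻¹) :=
        Delta_dmin_le hM0.le isDist_uniform (fun _ => by positivity)
          ⟨fun _ => by positivity, hsum ▸ inv_le_one_of_one_le₀ hM⟩ hH
    _ ≤ 2 * 1 + √ε * 1 := by
        rw [hl1]
        gcongr
        · exact inv_le_one_of_one_le₀ hM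
        · rw [sqrt_le_one, mul_inv, ← mul_assoc, mul_inv_cancel₀ hM0.ne', one_mul]
          exact inv_le_one_of_one_le₀ (by exact_mod_cast Fintype.card_pos)
    _ = 2 + √ε := by ring

end Smoothing

section Bounds

variable {M ε s : ℝ} {P : A × E → ℝ}

lemma Delta_dmin_le_exp_condRenyi [Nonempty A] [Nonempty E] {Q : E → ℝ} (hM : 1 ≤ M)
    (hs : 0 < s) (hP : IsSubDist P) (hQ : IsDist Q) (hQpos : ∀ e, 0 < Q e) :
    Delta_dmin M ε P ≤ (2 + √ε) * exp ((-(s * condRenyi P Q s) + s * log M) / (1 + 2 * s)) := by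
  rw [neg_mul_condRenyi hs.ne']
  by_cases hpos : ∃ p, 0 < P p
  · exact Delta_dmin_le_exp_log_sum (by linarith) hs.le hP hpos hQ hQpos
  simp only [not_exists, not_lt] at hpos
  have hT : ∑ a, ∑ e, P (a, e) ^ (1 + s) * Q e ^ (-s) = 0 := by
    simp [le_antisymm (hpos _) (hP.1 _), zero_rpow (by linarith : 1 + s ≠ 0)]
  have hlogM := log_nonneg hM
  rw [hT, log_zero, zero_add]
  exact (Delta_dmin_le_two_add_sqrt hM hP).trans
    (le_mul_of_one_le_right (by positivity) (one_le_exp (by positivity)))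

lemma Delta_dmin_le_exp_condRenyiUp [Nonempty A] [Nonempty E] (hM : 1 ≤ M) (hs : 0 ≤ s)
    (hP : IsSubDist P) :
    Delta_dmin M ε P ≤ (2 + √ε) * exp ((-(s * condRenyiUp P s) + s * log M) / (1 + 2 * s)) := by
  rcases hs.eq_or_lt with rfl | hs
  · simpa using Delta_dmin_le_two_add_sqrt hM hP
  rw [condRenyiUp]
  refine le_mul_exp_sSup ?_ (by positivity) hs (by positivity) ?_
  · exact ⟨_, _, isDist_uniform, fun _ => by positivity, rfl⟩
  rintro _ ⟨Q, hQ, hQpos, rfl⟩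
  exact Delta_dmin_le_exp_condRenyi hM hs hP hQ hQpos

lemma exists_Delta_Imin_le_eta (hM : 2 ≤ M) (hε : 0 ≤ ε) (hs : 0 ≤ s) (hP : IsDist P) :
    ∃ l, 0 ≤ l ∧ l ≤ exp ((-(s * condRenyiDown P s) + s * log M) / (1 + s)) ∧
      Delta_Imin M ε P ≤
        eta l (log M) + ε * exp ((-(s * condRenyiDown P s) + s * log M) / (1 + s)) := by
  have hM0 : 0 < M := by linarith
  have hPE : ∀ e, 0 ≤ margE P e := fun e => Finset.sum_nonneg fun a _ => hP.1 _
  obtain ⟨⟨a, e⟩, -, hPae⟩ : ∃ p ∈ Finset.univ, (0 : ℝ) < P p :=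
    Finset.exists_lt_of_sum_lt (by simp [hP.2])
  set T := ∑ a, ∑ e, P (a, e) ^ (1 + s) * margE P e ^ (-s)
  have hT : 0 < T := sum_rpow_pos hP.1 hPE hPae (hPae.trans_le (le_margE hP.1 a e)) s
  have hlogT : log T = -(s * condRenyiDown P s) := by
    rw [condRenyiDown, margNorm_eq_margE hP]
    rcases hs.eq_or_lt with rfl | hs
    · simp [T, ← Fintype.sum_prod_type, hP.2]
    · exact (neg_mul_condRenyi hs.ne' _ _).symm
  rw [← hlogT]
  set κ := (log T + s * log M) / (1 + s)
  have hκ : κ + s * κ = log T + s * log M := by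
    linarith [div_mul_cancel₀ (log T + s * log M) (by positivity : 1 + s ≠ 0)]
  -- chosen so that `M * c = c ^ (-s) * T`
  set c := exp (κ - log M) with hc
  have hMc : M * c = exp κ := by
    rw [hc, exp_sub, exp_log hM0]
    field_simp
  set P' := clip P (margE P) c
  have hl1 : l1 P P' ≤ exp κ :=
    (l1_clip_le hs (exp_pos _) hP.1 hPE fun a e h => h.trans_le (le_margE hP.1 a e)).trans_eq
      (rpow_neg_mul_eq_exp hT hκ)
  refine ⟨_, l1_nonneg _ _, hl1, ?_⟩
  calc Delta_Imin M ε P ≤ eta (l1 P P') (log M) + ε * M * exp (-Hmin P' (margE P)) :=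
        Delta_Imin_le hM hε hP (isSubDist_clip ⟨hP.1, hP.2.le⟩ hPE (exp_pos _).le) margE_clip_le
    _ ≤ eta (l1 P P') (log M) + ε * (M * c) := by
        rw [← mul_assoc]
        gcongr
        exact exp_neg_Hmin_clip_le ⟨a, e, hPae.trans_le (le_margE hP.1 a e), hPae⟩ (exp_pos _)
    _ = _ := by rw [hMc]

end Bounds

theorem Delta_dmin_le_sInf [Nonempty A] [Nonempty E] {M ε : ℝ} (hM : 1 ≤ M) {P : A × E → ℝ}
    (hP : IsSubDist P) :
    Delta_dmin M ε P ≤ (2 + √ε) * sInf {x | ∃ s : ℝ, 0 ≤ s ∧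
      x = exp ((-(s * condRenyiUp P s) + s * log M) / (1 + 2 * s))} := by
  refine le_apply_csInf_of_continuousAt (G := fun y => (2 + √ε) * y) ⟨1, 0, le_rfl, by simp⟩ ⟨0, ?_⟩
    (lt_add_one _) (by fun_prop) ?_
  · rintro _ ⟨s, -, rfl⟩
    positivity
  · rintro _ ⟨s, hs, rfl⟩ -
    exact Delta_dmin_le_exp_condRenyiUp hM hs hP

theorem Delta_Imin_le_eta_sInf {M ε : ℝ} (hM : 3 ≤ M) (hε : 0 ≤ ε) {P : A × E → ℝ}
    (hP : IsDist P) :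
    Delta_Imin M ε P ≤ eta (sInf {x | ∃ s : ℝ, 0 ≤ s ∧
      x = exp ((-(s * condRenyiDown P s) + s * log M) / (1 + s))}) (ε + log M) := by
  set S := {x | ∃ s : ℝ, 0 ≤ s ∧ x = exp ((-(s * condRenyiDown P s) + s * log M) / (1 + s))}
  have h1 : (1 : ℝ) ∈ S := ⟨0, le_rfl, by simp⟩
  have hbdd : BddBelow S := ⟨0, by rintro _ ⟨s, -, rfl⟩; positivity⟩
  have hlogM : 1 < log M := by
    rw [lt_log_iff_exp_lt (by linarith)]
    linarith [exp_one_lt_d9]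
  -- below `exp (log M - 1)` the map `eta · (log M)` is monotone
  have hb : sInf S < exp (log M - 1) :=
    (csInf_le hbdd h1).trans_lt (one_lt_exp_iff.2 (by linarith))
  refine le_apply_csInf_of_continuousAt ⟨1, h1⟩ hbdd hb (continuous_eta _).continuousAt ?_
  rintro _ ⟨s, hs, rfl⟩ hsb
  obtain ⟨l, hl0, hlx, hΔ⟩ := exists_Delta_Imin_le_eta (M := M) (by linarith) hε hs hP
  set x := exp ((-(s * condRenyiDown P s) + s * log M) / (1 + s))
  calc Delta_Imin M ε P ≤ eta l (log M) + ε * x := hΔ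
    _ ≤ eta x (log M) + ε * x := by gcongr; exact eta_le_eta hl0 hlx hsb.le
    _ = eta x (ε + log M) := by rw [eta, eta]; ring

/-- Theorem `L3-19-10` of the paper: explicit single-shot upper bounds on the
smoothing-of-min-entropy quantities `Δ_{d,min}` and `Δ_{I,min}` in terms of the
conditional Rényi entropies `H^↑_{1+s}` and `H^↓_{1+s}` (the `s = 0` terms of
the infima being `1`). -/
theorem statement13 {A E : Type*} [Fintype A] [Fintype E] [Nonempty A] [Nonempty E]
    (M ε : ℝ) (hM : 1 ≤ M) (hε : 0 < ε)
    (P : A × E → ℝ) (hP : IsSubDist P) :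
    (Delta_dmin M ε P ≤
      (2 + Real.sqrt ε) *
        sInf {x | ∃ s : ℝ, 0 ≤ s ∧
          x = Real.exp ((-(s * condRenyiUp P s) + s * Real.log M) / (1 + 2 * s))}) ∧
    (IsDist P → 3 ≤ M →
      Delta_Imin M ε P ≤
        eta (sInf {x | ∃ s : ℝ, 0 ≤ s ∧
            x = Real.exp ((-(s * condRenyiDown P s) + s * Real.log M) / (1 + s))})
          (ε + Real.log M)) :=
  ⟨Delta_dmin_le_sInf hM hP, fun hPd hM3 => Delta_Imin_le_eta_sInf hM3 hε.le hPd⟩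
end Hayashi
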